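/- With L as in the preceding construction (basis x, x², …, x^j, a, a², …, a^k, products [x,x^i]=x^{i+1}, [a,a^i]=a^{i+1}, [x,a]=a, [a,x]=−a, [x,a^i]=i a^i), the ideal A = span{a, a², …, a^k, x², …, x^j} satisfies A^3 = span{a³, …, a^k}; in particular A^3 ≠ 0 when k ≥ 3. -/
import Mathlib

set_option linter.unnecessarySimpa false

/-- The left Leibniz identity for a bilinear bracket `B`. -/
def LeibnizId {F L : Type*} [Field F] [AddCommGroup L] [Module F L]
    (B : L →ₗ[F] L →ₗ[F] L) : Prop :=
  ∀ a b c : L, B a (B b c) = B (B a b) c + B b (B a c)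

/-- The span of all brackets `[s,t]` with `s ∈ S`, `t ∈ T`. -/
def lbrk {F L : Type*} [Field F] [AddCommGroup L] [Module F L]
    (B : L →ₗ[F] L →ₗ[F] L) (S T : Submodule F L) : Submodule F L :=
  Submodule.span F {z : L | ∃ s ∈ S, ∃ t ∈ T, z = B s t}

/-- A subspace closed under the bracket. -/
def IsLeibSubalg {F L : Type*} [Field F] [AddCommGroup L] [Module F L]
    (B : L →ₗ[F] L →ₗ[F] L) (S : Submodule F L) : Prop :=
  ∀ x ∈ S, ∀ y ∈ S, B x y ∈ S

/-- A (two-sided) ideal. -/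
def IsLeibIdeal {F L : Type*} [Field F] [AddCommGroup L] [Module F L]
    (B : L →ₗ[F] L →ₗ[F] L) (S : Submodule F L) : Prop :=
  (∀ x : L, ∀ y ∈ S, B x y ∈ S) ∧ (∀ y ∈ S, ∀ x : L, B y x ∈ S)

/-- Lower central series: `L^1 = L`, `L^{n+1} = [L, L^n]`. -/
def leibLCS {F L : Type*} [Field F] [AddCommGroup L] [Module F L]
    (B : L →ₗ[F] L →ₗ[F] L) : ℕ → Submodule F L
  | 0 => ⊤
  | n + 1 => lbrk B ⊤ (leibLCS B n)

def LeibIsNilpotent {F L : Type*} [Field F] [AddCommGroup L] [Module F L]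
    (B : L →ₗ[F] L →ₗ[F] L) : Prop :=
  ∃ n, leibLCS B n = ⊥

/-- Lower central series of a subalgebra `S`. -/
def leibLCSIn {F L : Type*} [Field F] [AddCommGroup L] [Module F L]
    (B : L →ₗ[F] L →ₗ[F] L) (S : Submodule F L) : ℕ → Submodule F L
  | 0 => S
  | n + 1 => lbrk B S (leibLCSIn B S n)

/-- A subalgebra `S` is nilpotent (as an algebra in its own right). -/
def LeibSubalgNilpotent {F L : Type*} [Field F] [AddCommGroup L] [Module F L]
    (B : L →ₗ[F] L →ₗ[F] L) (S : Submodule F L) : Prop :=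
  ∃ n, leibLCSIn B S n = ⊥

/-- Derived series. -/
def leibDerived {F L : Type*} [Field F] [AddCommGroup L] [Module F L]
    (B : L →ₗ[F] L →ₗ[F] L) : ℕ → Submodule F L
  | 0 => ⊤
  | n + 1 => lbrk B (leibDerived B n) (leibDerived B n)

def LeibIsSolvable {F L : Type*} [Field F] [AddCommGroup L] [Module F L]
    (B : L →ₗ[F] L →ₗ[F] L) : Prop :=
  ∃ n, leibDerived B n = ⊥

/-- The normalizer of a subspace `S`: elements `x` with `[x,S] ⊆ S` and `[S,x] ⊆ S`. -/
def leibNormalizer {F L : Type*} [Field F] [AddCommGroup L] [Module F L]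
    (B : L →ₗ[F] L →ₗ[F] L) (S : Submodule F L) : Submodule F L where
  carrier := {x : L | ∀ m ∈ S, B x m ∈ S ∧ B m x ∈ S}
  add_mem' := by
    intro x y hx hy m hm
    constructor
    · have := S.add_mem (hx m hm).1 (hy m hm).1
      simpa [map_add] using this
    · have := S.add_mem (hx m hm).2 (hy m hm).2
      simpa [map_add] using this
  zero_mem' := by
    intro m hm
    constructor
    · simpa [map_zero] using S.zero_mem
    · simpa [map_zero] using S.zero_mem
  smul_mem' := by
    intro c x hx m hm
    constructor
    · have := S.smul_mem c (hx m hm).1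
      simpa [map_smul] using this
    · have := S.smul_mem c (hx m hm).2
      simpa [map_smul] using this

/-- `Leib(L)`: the span of all squares. -/
def leibLeib {F L : Type*} [Field F] [AddCommGroup L] [Module F L]
    (B : L →ₗ[F] L →ₗ[F] L) : Submodule F L :=
  Submodule.span F {z : L | ∃ y : L, z = B y y}

/-- A maximal (proper) subalgebra. -/
def IsMaxSubalg {F L : Type*} [Field F] [AddCommGroup L] [Module F L]
    (B : L →ₗ[F] L →ₗ[F] L) (S : Submodule F L) : Prop :=
  IsLeibSubalg B S ∧ S ≠ ⊤ ∧ ∀ T : Submodule F L, IsLeibSubalg B T → S < T → T = ⊤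

/-- `N` is the core of `M`: the largest ideal of `L` contained in `M`. -/
def IsCore {F L : Type*} [Field F] [AddCommGroup L] [Module F L]
    (B : L →ₗ[F] L →ₗ[F] L) (M N : Submodule F L) : Prop :=
  IsLeibIdeal B N ∧ N ≤ M ∧ ∀ C : Submodule F L, IsLeibIdeal B C → C ≤ M → C ≤ N

/-- Minimal nonnilpotent: nonnilpotent, solvable, all proper subalgebras nilpotent. -/
def MinNonnilpotent {F L : Type*} [Field F] [AddCommGroup L] [Module F L]
    (B : L →ₗ[F] L →ₗ[F] L) : Prop :=
  ¬ LeibIsNilpotent B ∧ LeibIsSolvable B ∧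
    ∀ S : Submodule F L, IsLeibSubalg B S → S ≠ ⊤ → LeibSubalgNilpotent B S

/-- Cyclic: generated as an algebra by a single element. -/
def LeibCyclic {F L : Type*} [Field F] [AddCommGroup L] [Module F L]
    (B : L →ₗ[F] L →ₗ[F] L) : Prop :=
  ∃ z : L, ∀ S : Submodule F L, IsLeibSubalg B S → z ∈ S → S = ⊤

lemma lbrk_eq_map₂ {F L : Type*} [Field F] [AddCommGroup L] [Module F L]
    (B : L →ₗ[F] L →ₗ[F] L) (S T : Submodule F L) :
    lbrk B S T = Submodule.map₂ B S T := by
  rw [Submodule.map₂_eq_span_image2, lbrk]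
  congr 1
  ext z
  constructor
  · rintro ⟨s, hs, t, ht, rfl⟩; exact ⟨s, hs, t, ht, rfl⟩
  · rintro ⟨s, hs, t, ht, rfl⟩; exact ⟨s, hs, t, ht, rfl⟩

lemma lbrk_span_span {F L : Type*} [Field F] [AddCommGroup L] [Module F L]
    (B : L →ₗ[F] L →ₗ[F] L) (S T : Set L) :
    lbrk B (Submodule.span F S) (Submodule.span F T)
      = Submodule.span F (Set.image2 (fun s t => B s t) S T) := by
  rw [lbrk_eq_map₂, Submodule.map₂_span_span]

/-- with `L` as in the preceding construction (`X i = xⁱ`, `A i = aⁱ`), the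
ideal `A = span{a, …, a^k, x², …, x^j}` satisfies `A³ = span{a³, …, a^k}`; in particular
`A³ ≠ 0` when `k ≥ 3`. -/
theorem stmt16 {F L : Type*} [Field F] [CharZero F] [AddCommGroup L] [Module F L]
    (j k : ℕ) (hj : 1 ≤ j) (hk : 1 ≤ k)
    (B : L →ₗ[F] L →ₗ[F] L) (X A : ℕ → L)
    (hind : LinearIndependent F
      (Sum.elim (fun i : Fin j => X (i + 1)) (fun i : Fin k => A (i + 1))))
    (hspan : Submodule.span F (X '' Set.Icc 1 j ∪ A '' Set.Icc 1 k) = ⊤)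
    (hxx : ∀ i, 1 ≤ i → i < j → B (X 1) (X i) = X (i + 1))
    (hxj : B (X 1) (X j) = 0)
    (haa : ∀ i, 1 ≤ i → i < k → B (A 1) (A i) = A (i + 1))
    (hak : B (A 1) (A k) = 0)
    (hxa : B (X 1) (A 1) = A 1)
    (hax : B (A 1) (X 1) = - A 1)
    (hxai : ∀ i, 2 ≤ i → i ≤ k → B (X 1) (A i) = (i : F) • A i)
    (haxm : ∀ m, 2 ≤ m → m ≤ j → B (A 1) (X m) = 0)
    (hXhi : ∀ i, 2 ≤ i → i ≤ j → ∀ m,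
      (1 ≤ m → m ≤ j → B (X i) (X m) = 0) ∧ (1 ≤ m → m ≤ k → B (X i) (A m) = 0))
    (hAhi : ∀ i, 2 ≤ i → i ≤ k → ∀ m,
      (1 ≤ m → m ≤ j → B (A i) (X m) = 0) ∧ (1 ≤ m → m ≤ k → B (A i) (A m) = 0)) :
    lbrk B (Submodule.span F (A '' Set.Icc 1 k ∪ X '' Set.Icc 2 j))
        (lbrk B (Submodule.span F (A '' Set.Icc 1 k ∪ X '' Set.Icc 2 j))
          (Submodule.span F (A '' Set.Icc 1 k ∪ X '' Set.Icc 2 j)))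
      = Submodule.span F (A '' Set.Icc 3 k) ∧
    (3 ≤ k →
      lbrk B (Submodule.span F (A '' Set.Icc 1 k ∪ X '' Set.Icc 2 j))
          (lbrk B (Submodule.span F (A '' Set.Icc 1 k ∪ X '' Set.Icc 2 j))
            (Submodule.span F (A '' Set.Icc 1 k ∪ X '' Set.Icc 2 j)))
        ≠ ⊥) := by
  classical
  set G : Set L := A '' Set.Icc 1 k ∪ X '' Set.Icc 2 j with hG
  -- Step 1: A² = span (A '' Icc 2 k)
  have hA2 : lbrk B (Submodule.span F G) (Submodule.span F G)
      = Submodule.span F (A '' Set.Icc 2 k) := by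
    rw [lbrk_span_span]
    apply le_antisymm
    · rw [Submodule.span_le]
      rintro z ⟨s, hs, t, ht, rfl⟩
      beta_reduce
      rcases hs with ⟨i, ⟨hi1, hik⟩, rfl⟩ | ⟨i, ⟨hi2, hij⟩, rfl⟩
      · rcases eq_or_lt_of_le hi1 with h1 | h1
        · -- i = 1
          rcases ht with ⟨m, ⟨hm1, hmk⟩, rfl⟩ | ⟨m, ⟨hm2, hmj⟩, rfl⟩
          · rcases eq_or_lt_of_le hmk with h2 | h2
            · simp only [← h1, h2, hak, SetLike.mem_coe]
              exact Submodule.zero_mem _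
            · rw [← h1, haa m hm1 h2]
              exact Submodule.subset_span ⟨m + 1, ⟨by omega, by omega⟩, rfl⟩
          · simp only [← h1, haxm m hm2 hmj, SetLike.mem_coe]
            exact Submodule.zero_mem _
        · -- 2 ≤ i
          rcases ht with ⟨m, ⟨hm1, hmk⟩, rfl⟩ | ⟨m, ⟨hm2, hmj⟩, rfl⟩
          · simp only [(hAhi i h1 hik m).2 hm1 hmk, SetLike.mem_coe]
            exact Submodule.zero_mem _
          · simp only [(hAhi i h1 hik m).1 (by omega) hmj, SetLike.mem_coe]
            exact Submodule.zero_mem _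
      · rcases ht with ⟨m, ⟨hm1, hmk⟩, rfl⟩ | ⟨m, ⟨hm2, hmj⟩, rfl⟩
        · simp only [(hXhi i hi2 hij m).2 hm1 hmk, SetLike.mem_coe]
          exact Submodule.zero_mem _
        · simp only [(hXhi i hi2 hij m).1 (by omega) hmj, SetLike.mem_coe]
          exact Submodule.zero_mem _
    · rw [Submodule.span_le]
      rintro z ⟨i, ⟨hi2, hik⟩, rfl⟩
      have : A i = B (A 1) (A (i - 1)) := by
        rw [haa (i - 1) (by omega) (by omega)]
        congr 1; omega
      rw [this]
      exact Submodule.subset_span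
        ⟨A 1, Or.inl ⟨1, ⟨le_refl 1, hk⟩, rfl⟩,
         A (i - 1), Or.inl ⟨i - 1, ⟨by omega, by omega⟩, rfl⟩, rfl⟩
  -- Step 2: A³ = span (A '' Icc 3 k)
  have hA3 : lbrk B (Submodule.span F G)
      (lbrk B (Submodule.span F G) (Submodule.span F G))
      = Submodule.span F (A '' Set.Icc 3 k) := by
    rw [hA2, lbrk_span_span]
    apply le_antisymm
    · rw [Submodule.span_le]
      rintro z ⟨s, hs, t, ht, rfl⟩
      beta_reduce
      rcases ht with ⟨m, ⟨hm2, hmk⟩, rfl⟩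
      rcases hs with ⟨i, ⟨hi1, hik⟩, rfl⟩ | ⟨i, ⟨hi2, hij⟩, rfl⟩
      · rcases eq_or_lt_of_le hi1 with h1 | h1
        · rcases eq_or_lt_of_le hmk with h2 | h2
          · simp only [← h1, h2, hak, SetLike.mem_coe]
            exact Submodule.zero_mem _
          · rw [← h1, haa m (by omega) h2]
            exact Submodule.subset_span ⟨m + 1, ⟨by omega, by omega⟩, rfl⟩
        · simp only [(hAhi i h1 hik m).2 (by omega) hmk, SetLike.mem_coe]
          exact Submodule.zero_mem _
      · simp only [(hXhi i hi2 hij m).2 (by omega) hmk, SetLike.mem_coe]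
        exact Submodule.zero_mem _
    · rw [Submodule.span_le]
      rintro z ⟨i, ⟨hi3, hik⟩, rfl⟩
      have : A i = B (A 1) (A (i - 1)) := by
        rw [haa (i - 1) (by omega) (by omega)]
        congr 1; omega
      rw [this]
      exact Submodule.subset_span
        ⟨A 1, Or.inl ⟨1, ⟨le_refl 1, hk⟩, rfl⟩,
         A (i - 1), ⟨i - 1, ⟨by omega, by omega⟩, rfl⟩, rfl⟩
  refine ⟨hA3, fun hk3 => ?_⟩
  rw [hA3]
  intro hbot
  have hmem : A 3 ∈ Submodule.span F (A '' Set.Icc 3 k) :=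
    Submodule.subset_span ⟨3, ⟨le_refl 3, hk3⟩, rfl⟩
  rw [hbot, Submodule.mem_bot] at hmem
  have hne : A 3 ≠ 0 := by
    have := hind.ne_zero (Sum.inr ⟨2, by omega⟩)
    simpa using this
  exact hne hmem
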